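/- arXiv:0806.1585 — 2 statements merged into one kernel-verified Lean document; each statement's English description precedes it below -/
import Mathlib

section
/- Let ℓ₁,…,ℓₙ₊₁ (n ≥ 3) be positive integers with even sum, and suppose there are vectors v₁,…,vₙ₊₁ in ℝ³ with |vᵢ| = ℓᵢ summing to zero. Then the vectors can be chosen so that ℓ'ₙ := |vₙ + vₙ₊₁| is an integer and ℓ'ₙ + ℓₙ + ℓₙ₊₁ is even. -/
/-!
The resultant `‖∑ vᵢ‖` of vectors of prescribed lengths in a real normed space of dimension `> 1`
ranges over an interval, since the product of the spheres is connected; that interval contains the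
current value `t = ‖w + z‖` and the stretched-out value `∑ ℓᵢ`. Take `d` to be the least integer
`≥ t` with `d + a + b` even. Both `a + b` and `∑ ℓᵢ` are integers `≥ t` of that parity, so
`t ≤ d ≤ min (a + b) (∑ ℓᵢ)`: the `ℓᵢ` can be re-chosen with resultant of length `d`, and since
`|a - b| ≤ t ≤ d ≤ a + b`, that resultant splits into vectors of lengths `a` and `b`.
-/

open Metric Set

lemma exists_least_nat_ge_even_add (t : ℝ) (p : ℕ) :
    ∃ d : ℕ, t ≤ d ∧ Even (d + p) ∧ ∀ N : ℕ, t ≤ N → Even (N + p) → d ≤ N := by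
  set c := ⌈t⌉₊
  by_cases hc : Even (c + p)
  · exact ⟨c, Nat.le_ceil t, hc, fun N hN _ => Nat.ceil_le.mpr hN⟩
  · refine ⟨c + 1, (Nat.le_ceil t).trans (by exact_mod_cast c.le_succ), ?_, fun N hN hNp => ?_⟩
    · rwa [add_right_comm, Nat.even_add_one]
    · have hcN : c ≤ N := Nat.ceil_le.mpr hN
      have hne : c ≠ N := by rintro rfl; exact hc hNp
      omega

section Resultant

variable {E : Type*} [NormedAddCommGroup E] [NormedSpace ℝ E]

lemma exists_norm_eq_one_smul_eq [Nontrivial E] (x : E) : ∃ e : E, ‖e‖ = 1 ∧ ‖x‖ • e = x := by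
  rcases eq_or_ne x 0 with rfl | hx
  · obtain ⟨e, he⟩ := exists_norm_eq E zero_le_one
    exact ⟨e, he, by simp⟩
  · exact ⟨‖x‖⁻¹ • x, by simp [norm_smul, hx], by simp [smul_smul, hx]⟩

variable (hE : 1 < Module.rank ℝ E)
include hE

lemma exists_add_eq_of_abs_sub_le_norm_le_add (x : E) {r₁ r₂ : ℝ}
    (hlo : |r₁ - r₂| ≤ ‖x‖) (hhi : ‖x‖ ≤ r₁ + r₂) :
    ∃ u v : E, ‖u‖ = r₁ ∧ ‖v‖ = r₂ ∧ u + v = x := by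
  have : Nontrivial E := (rank_pos_iff_nontrivial (R := ℝ)).1 (zero_lt_one.trans hE)
  obtain ⟨e, he, hxe⟩ := exists_norm_eq_one_smul_eq x
  have hr₁ : 0 ≤ r₁ := by linarith [neg_le_abs (r₁ - r₂)]
  have hnear : ‖x - r₁ • e‖ = |‖x‖ - r₁| := by
    rw [← hxe, ← sub_smul, norm_smul, he, mul_one, Real.norm_eq_abs, hxe]
  have hfar : ‖x - -(r₁ • e)‖ = ‖x‖ + r₁ := by
    rw [sub_neg_eq_add, ← hxe, ← add_smul, norm_smul, he, mul_one, hxe,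
      Real.norm_of_nonneg (by positivity)]
  have hr₂ : r₂ ∈ Icc |‖x‖ - r₁| (‖x‖ + r₁) := by
    have := abs_le.mp hlo
    exact ⟨abs_le.2 ⟨by linarith, by linarith⟩, by linarith⟩
  have hnorm : ‖r₁ • e‖ = r₁ := by rw [norm_smul, he, mul_one, Real.norm_of_nonneg hr₁]
  obtain ⟨u, hu, hxu⟩ := (isPreconnected_sphere hE 0 r₁).intermediate_value
    (a := r₁ • e) (b := -(r₁ • e)) (f := fun u => ‖x - u‖)
    (mem_sphere_zero_iff_norm.2 hnorm) (mem_sphere_zero_iff_norm.2 (by rwa [norm_neg]))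
    (by fun_prop) (by rwa [hnear, hfar])
  exact ⟨u, x - u, mem_sphere_zero_iff_norm.1 hu, hxu, add_sub_cancel u x⟩

lemma exists_norm_sum_eq {ι : Type*} [Fintype ι] (v : ι → E) {r : ℝ}
    (hlo : ‖∑ i, v i‖ ≤ r) (hhi : r ≤ ∑ i, ‖v i‖) :
    ∃ u : ι → E, (∀ i, ‖u i‖ = ‖v i‖) ∧ ‖∑ i, u i‖ = r := by
  have : Nontrivial E := (rank_pos_iff_nontrivial (R := ℝ)).1 (zero_lt_one.trans hE)
  obtain ⟨e, he⟩ := exists_norm_eq E zero_le_one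
  have hmem : ∀ u : ι → E, u ∈ univ.pi (fun i => sphere (0 : E) ‖v i‖) ↔ ∀ i, ‖u i‖ = ‖v i‖ := by
    simp
  have hstretched : ‖∑ i, ‖v i‖ • e‖ = ∑ i, ‖v i‖ := by
    rw [← Finset.sum_smul, norm_smul, he, mul_one, Real.norm_of_nonneg (by positivity)]
  obtain ⟨u, hu, hur⟩ :=
    (isPreconnected_univ_pi fun i => isPreconnected_sphere hE 0 ‖v i‖).intermediate_value
      (f := fun u => ‖∑ i, u i‖) ((hmem v).2 fun _ => rfl)
      ((hmem _).2 fun i => by simp [norm_smul, he]) (by fun_prop)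
      ⟨hlo, hhi.trans hstretched.ge⟩
  exact ⟨u, (hmem u).1 hu, hur⟩

end Resultant

theorem exists_integral_diagonal_general (n : ℕ)
    (ℓ : Fin (n - 1) → ℕ) (a b : ℕ)
    (heven : Even (∑ i, ℓ i + a + b))
    (h : ∃ (v : Fin (n - 1) → EuclideanSpace ℝ (Fin 3))
          (w z : EuclideanSpace ℝ (Fin 3)),
          (∀ i, ‖v i‖ = ℓ i) ∧ ‖w‖ = a ∧ ‖z‖ = b ∧ (∑ i, v i) + w + z = 0) :
    ∃ (v : Fin (n - 1) → EuclideanSpace ℝ (Fin 3))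
      (w z : EuclideanSpace ℝ (Fin 3)),
      (∀ i, ‖v i‖ = ℓ i) ∧ ‖w‖ = a ∧ ‖z‖ = b ∧ (∑ i, v i) + w + z = 0 ∧
      ∃ d : ℕ, ‖w + z‖ = d ∧ Even (d + a + b) := by
  obtain ⟨v, w, z, hv, hw, hz, hsum⟩ := h
  have hE : 1 < Module.rank ℝ (EuclideanSpace ℝ (Fin 3)) := by
    rw [← Module.finrank_eq_rank, finrank_euclideanSpace_fin]; norm_num
  have hwz : w + z = -∑ i, v i := eq_neg_of_add_eq_zero_right (by rwa [← add_assoc])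
  have hvwz : ‖∑ i, v i‖ = ‖w + z‖ := by rw [hwz, norm_neg]
  have hwz_ge : |(a : ℝ) - b| ≤ ‖w + z‖ := by simpa [hw, hz] using abs_norm_sub_norm_le w (-z)
  have hwz_le : ‖w + z‖ ≤ a + b := by simpa [hw, hz] using norm_add_le w z
  have hvwz_le : ‖w + z‖ ≤ ∑ i, ‖v i‖ := hvwz ▸ norm_sum_le _ _
  obtain ⟨d, htd, hd, hd_least⟩ := exists_least_nat_ge_even_add ‖w + z‖ (a + b)
  have hdab : (d : ℝ) ≤ a + b := by
    exact_mod_cast hd_least (a + b) (mod_cast hwz_le) (Even.add_self _)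
  have hdS : (d : ℝ) ≤ ∑ i, ‖v i‖ := by
    simp only [hv] at hvwz_le ⊢
    exact_mod_cast hd_least _ (mod_cast hvwz_le) (by rwa [← add_assoc])
  obtain ⟨v', hv', hv'd⟩ := exists_norm_sum_eq hE v (hvwz.trans_le htd) hdS
  obtain ⟨w', z', hw', hz', hwz'⟩ := exists_add_eq_of_abs_sub_le_norm_le_add hE (-∑ i, v' i)
    (by rw [norm_neg, hv'd]; exact hwz_ge.trans htd) (by rwa [norm_neg, hv'd])
  refine ⟨v', w', z', fun i => (hv' i).trans (hv i), hw', hz', ?_, d, ?_, by rwa [← add_assoc] at hd⟩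
  · rw [add_assoc, hwz', add_neg_cancel]
  · rw [hwz', norm_neg, hv'd]

/-- Inductive step for the non-triviality of `H_ℓ`: if `ℓ₁, …, ℓₙ₊₁` (with
`n ≥ 3`) are positive integers with even sum and there exist vectors in `ℝ³`
of these lengths summing to zero, then the vectors can be chosen so that the
diagonal length `ℓ'ₙ = |vₙ + vₙ₊₁|` is an integer with `ℓ'ₙ + ℓₙ + ℓₙ₊₁` even.
Here the first `n - 1` lengths are `ℓ`, and the last two are `a = ℓₙ` and
`b = ℓₙ₊₁`. -/
theorem exists_integral_diagonal (n : ℕ) (hn : 3 ≤ n)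
    (ℓ : Fin (n - 1) → ℕ) (a b : ℕ)
    (hpos : ∀ i, 0 < ℓ i) (ha : 0 < a) (hb : 0 < b)
    (heven : Even (∑ i, ℓ i + a + b))
    (h : ∃ (v : Fin (n - 1) → EuclideanSpace ℝ (Fin 3))
          (w z : EuclideanSpace ℝ (Fin 3)),
          (∀ i, ‖v i‖ = ℓ i) ∧ ‖w‖ = a ∧ ‖z‖ = b ∧ (∑ i, v i) + w + z = 0) :
    ∃ (v : Fin (n - 1) → EuclideanSpace ℝ (Fin 3))
      (w z : EuclideanSpace ℝ (Fin 3)),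
      (∀ i, ‖v i‖ = ℓ i) ∧ ‖w‖ = a ∧ ‖z‖ = b ∧ (∑ i, v i) + w + z = 0 ∧
      ∃ d : ℕ, ‖w + z‖ = d ∧ Even (d + a + b) :=
  exists_integral_diagonal_general n ℓ a b heven h
end

section
/- Let λ : H → ℝ^{E(Γ)} be defined on H = {(x₁,…,xₙ) ∈ (ℝ³)ⁿ : Σxᵢ = 0} by λ_a(x) = |Σ_{i∈I(a)} xᵢ| for internal edges a and λ_a(x) = |x_a| for half-edges a, where Γ is an admissible graph with n half-edges. Then the image of λ is exactly the convex polyhedron Δ(Γ) of tuples (d_a) of nonnegative reals satisfying the triangle inequalities |d_a − d_b| ≤ d_c ≤ d_a + d_b at every vertex of Γ (for the three edges a,b,c incident to that vertex). -/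
/-!
The two sides of an edge of a tree partition its vertices. Hence at a trivalent vertex `v`
with neighbours `w, a, b` the leaf sums satisfy `λ(v,w) = λ(a,v) + λ(b,v) = -(λ(v,a) + λ(v,b))`
as vectors, which gives the triangle inequalities. Conversely, cut the tree at an edge and prescribe
the vector `λ` recursively, moving away from the cut: a vector `u` with `‖u‖ = d(v,w)` splits as
`p + (u - p)` with `‖p‖ = d(v,a)` and `‖u - p‖ = d(v,b)`, because three lengths satisfying the
triangle inequalities are the sides of a triangle, which can be placed with `u` as one side in a
space of dimension at least two. At a leaf the prescribed vector is the value of `x` there.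
-/

/-- The set of vertices that can be joined to `v` by a walk avoiding `w`:
for a directed edge `(v, w)` of a tree, this is the side of the edge
containing `v`. -/
def sideSet {V : Type*} (G : SimpleGraph V) (v w : V) : Set V :=
  {x | ∃ p : G.Walk x v, w ∉ p.support}

open Module RealInnerProductSpace SimpleGraph Set

section Geometry

variable {E : Type*} [NormedAddCommGroup E] [InnerProductSpace ℝ E]

theorem exists_norm_eq_one_inner_eq_zero (hE : 2 ≤ finrank ℝ E) (u : E) :
    ∃ e : E, ‖e‖ = 1 ∧ ⟪u, e⟫ = 0 := by
  have : FiniteDimensional ℝ E := Module.finite_of_finrank_pos (by omega)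
  have hu : finrank ℝ (ℝ ∙ u) ≤ 1 := by
    simpa using finrank_span_le_card ({u} : Set E)
  have hpos : 0 < finrank ℝ (ℝ ∙ u)ᗮ := by
    have := (ℝ ∙ u).finrank_add_finrank_orthogonal
    omega
  obtain ⟨w, hw, hw0⟩ := Submodule.exists_mem_ne_zero_of_ne_bot
    (Submodule.one_le_finrank_iff.mp hpos)
  refine ⟨‖w‖⁻¹ • w, norm_smul_inv_norm hw0, ?_⟩
  rw [inner_smul_right, Submodule.mem_orthogonal_singleton_iff_inner_right.mp hw, mul_zero]

theorem norm_smul_add_smul_sq {u e : E} (he : ‖e‖ = 1) (hue : ⟪u, e⟫ = 0) (a b : ℝ) :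
    ‖a • u + b • e‖ ^ 2 = a ^ 2 * ‖u‖ ^ 2 + b ^ 2 := by
  simp [norm_add_sq_real, norm_smul, inner_smul_left, inner_smul_right, hue, he, mul_pow]

theorem exists_norm_eq_norm_sub_eq (hE : 2 ≤ finrank ℝ E) (u : E) {s t : ℝ}
    (h₁ : ‖u‖ ≤ s + t) (h₂ : s ≤ ‖u‖ + t) (h₃ : t ≤ ‖u‖ + s) :
    ∃ p : E, ‖p‖ = s ∧ ‖u - p‖ = t := by
  obtain ⟨e, he, hue⟩ := exists_norm_eq_one_inner_eq_zero hE u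
  have hs : 0 ≤ s := by linarith
  have ht : 0 ≤ t := by linarith
  rcases eq_or_ne u 0 with rfl | hu
  · refine ⟨s • e, ?_, ?_⟩
    · rw [norm_smul, he, Real.norm_of_nonneg hs, mul_one]
    · rw [zero_sub, norm_neg, norm_smul, he, Real.norm_of_nonneg hs, mul_one]
      simp only [norm_zero, zero_add] at h₂ h₃
      linarith
  have hr : 0 < ‖u‖ := norm_pos_iff.mpr hu
  -- `c • u` is the foot of the altitude from the apex `p`.
  set c := (‖u‖ ^ 2 + s ^ 2 - t ^ 2) / (2 * ‖u‖ ^ 2) with hc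
  have hcu : 2 * c * ‖u‖ ^ 2 = ‖u‖ ^ 2 + s ^ 2 - t ^ 2 := by
    rw [hc]; field_simp
  have hcs : c ^ 2 * ‖u‖ ^ 2 ≤ s ^ 2 := by
    have heron : 0 ≤ (‖u‖ + s - t) * (‖u‖ + s + t) * ((t - ‖u‖ + s) * (t + ‖u‖ - s)) :=
      mul_nonneg (mul_nonneg (by linarith) (by linarith)) (mul_nonneg (by linarith) (by linarith))
    have : (2 * c * ‖u‖ ^ 2) ^ 2 ≤ 4 * s ^ 2 * ‖u‖ ^ 2 := by rw [hcu]; linarith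
    nlinarith [pow_pos hr 2]
  refine ⟨c • u + √(s ^ 2 - c ^ 2 * ‖u‖ ^ 2) • e, ?_, ?_⟩
  · rw [← sq_eq_sq₀ (norm_nonneg _) hs, norm_smul_add_smul_sq he hue,
      Real.sq_sqrt (by linarith)]
    ring
  · have : u - (c • u + √(s ^ 2 - c ^ 2 * ‖u‖ ^ 2) • e)
        = (1 - c) • u + (-√(s ^ 2 - c ^ 2 * ‖u‖ ^ 2)) • e := by module
    rw [this, ← sq_eq_sq₀ (norm_nonneg _) ht, norm_smul_add_smul_sq he hue, neg_sq,
      Real.sq_sqrt (by linarith)]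
    linear_combination -hcu

end Geometry

section Sides

variable {V : Type*} {G : SimpleGraph V} {v w x y p q a b : V}

theorem mem_sideSet_self (h : v ≠ w) : v ∈ sideSet G v w :=
  ⟨.nil, by simpa using h.symm⟩

theorem mem_sideSet_of_adj (hxy : G.Adj x y) (hy : y ∈ sideSet G v w) (hx : x ≠ w) :
    x ∈ sideSet G v w := by
  obtain ⟨W, hW⟩ := hy
  exact ⟨.cons hxy W, by simp [hW, hx.symm]⟩

theorem sideSet_subset_sideSet (hw : w ∉ sideSet G p q) (hp : p ∈ sideSet G v w) :
    sideSet G p q ⊆ sideSet G v w := by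
  classical
  rintro x ⟨W, hqW⟩
  obtain ⟨W', hwW'⟩ := hp
  have hwW : w ∉ W.support := fun h =>
    hw ⟨W.dropUntil w h, fun hq => hqW (W.support_dropUntil_subset_support h hq)⟩
  exact ⟨W.append W', by simp [Walk.mem_support_append_iff, hwW, hwW']⟩

theorem eq_or_exists_mem_sideSet (hx : x ∈ sideSet G v w) :
    x = v ∨ ∃ a ∈ G.neighborSet v \ {w}, x ∈ sideSet G a v := by
  obtain ⟨W, hW⟩ := hx
  induction W with
  | nil => exact .inl rfl
  | @cons x y v hxy W ih =>
    simp only [Walk.support_cons, List.mem_cons, not_or] at hW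
    by_cases hxv : x = v
    · exact .inl hxv
    refine .inr ?_
    rcases ih hW.2 with rfl | ⟨a, ha, hya⟩
    · exact ⟨x, ⟨hxy.symm, Ne.symm hW.1⟩, mem_sideSet_self hxv⟩
    · exact ⟨a, ha, mem_sideSet_of_adj hxy hya hxv⟩

theorem mem_sideSet_or_mem_sideSet (hG : G.Preconnected) (hvw : G.Adj v w) (x : V) :
    x ∈ sideSet G v w ∨ x ∈ sideSet G w v := by
  obtain ⟨W⟩ := hG x v
  induction W with
  | nil => exact .inl (mem_sideSet_self hvw.ne)
  | @cons x y v hxy W ih =>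
    rcases ih hvw with hy | hy
    · by_cases hxw : x = w
      · subst hxw; exact .inr (mem_sideSet_self hvw.ne')
      · exact .inl (mem_sideSet_of_adj hxy hy hxw)
    · by_cases hxv : x = v
      · subst hxv; exact .inl (mem_sideSet_self hvw.ne)
      · exact .inr (mem_sideSet_of_adj hxy hy hxv)

theorem disjoint_sideSet (hG : G.IsAcyclic) (hvw : G.Adj v w) :
    Disjoint (sideSet G v w) (sideSet G w v) := by
  refine Set.disjoint_left.mpr fun x ⟨W, hW⟩ ⟨W', hW'⟩ => ?_
  -- Every walk from `v` to `w` crosses the bridge `vw`, but this one avoids it.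
  have := isBridge_iff_forall_walk_mem_edges.mp (isAcyclic_iff_forall_adj_isBridge.mp hG hvw)
    (W.reverse.append W')
  rw [Walk.edges_append, List.mem_append] at this
  rcases this with h | h
  · exact hW (by simpa using W.reverse.snd_mem_support_of_mem_edges h)
  · exact hW' (W'.fst_mem_support_of_mem_edges h)

theorem notMem_sideSet_iff (hG : G.IsTree) (hvw : G.Adj v w) :
    x ∉ sideSet G v w ↔ x ∈ sideSet G w v :=
  ⟨(mem_sideSet_or_mem_sideSet hG.connected.preconnected hvw x).resolve_left,
    fun hx h => (disjoint_sideSet hG.isAcyclic hvw).notMem_of_mem_left h hx⟩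

theorem notMem_sideSet_of_adj (hG : G.IsAcyclic) (hvw : G.Adj v w) : w ∉ sideSet G v w :=
  (disjoint_sideSet hG hvw).notMem_of_mem_right (mem_sideSet_self hvw.ne')

theorem sideSet_subset_of_adj (hG : G.IsAcyclic) (hvw : G.Adj v w)
    (ha : a ∈ G.neighborSet v \ {w}) : sideSet G a v ⊆ sideSet G v w := by
  obtain ⟨hva, haw : a ≠ w⟩ := ha
  refine sideSet_subset_sideSet (fun hw => ?_)
    (mem_sideSet_of_adj hva.symm (mem_sideSet_self hvw.ne) haw)
  exact (disjoint_sideSet hG hva.symm).notMem_of_mem_left hw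
    (mem_sideSet_of_adj hvw.symm (mem_sideSet_self hva.ne) haw.symm)

theorem disjoint_sideSet_of_ne (hG : G.IsAcyclic) (hva : G.Adj v a) (hvb : G.Adj v b)
    (hab : a ≠ b) : Disjoint (sideSet G a v) (sideSet G b v) :=
  (disjoint_sideSet hG hvb).mono_left (sideSet_subset_of_adj hG hvb ⟨hva, hab⟩)

theorem sideSet_eq_insert_biUnion (hG : G.IsAcyclic) (hvw : G.Adj v w) :
    sideSet G v w = insert v (⋃ a ∈ G.neighborSet v \ {w}, sideSet G a v) := by
  ext x
  simp only [mem_insert_iff, mem_iUnion, exists_prop]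
  refine ⟨eq_or_exists_mem_sideSet, ?_⟩
  rintro (rfl | ⟨a, ha, hx⟩)
  exacts [mem_sideSet_self hvw.ne, sideSet_subset_of_adj hG hvw ha hx]

theorem eq_and_eq_of_mem_sideSet_of_notMem (hG : G.IsAcyclic) (hvw : G.Adj v w)
    (hpq : G.Adj p q) (hv : v ∈ sideSet G p q) (hw : w ∉ sideSet G p q) : p = v ∧ q = w := by
  obtain rfl : w = q := by_contra fun hwq => hw (mem_sideSet_of_adj hvw.symm hv hwq)
  refine ⟨by_contra fun hpv => ?_, rfl⟩
  exact (disjoint_sideSet hG hpq).notMem_of_mem_left hv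
    (mem_sideSet_of_adj hvw (mem_sideSet_self hpq.ne') (Ne.symm hpv))

theorem eq_and_eq_or_exists_sideSet_subset (hG : G.IsAcyclic) (hvw : G.Adj v w)
    (hpq : G.Adj p q) (hsub : sideSet G p q ⊆ sideSet G v w) :
    (p = v ∧ q = w) ∨ ∃ a ∈ G.neighborSet v \ {w}, sideSet G p q ⊆ sideSet G a v := by
  by_cases hv : v ∈ sideSet G p q
  · exact .inl (eq_and_eq_of_mem_sideSet_of_notMem hG hvw hpq hv
      fun hw => notMem_sideSet_of_adj hG hvw (hsub hw))
  refine .inr ?_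
  have hp := mem_sideSet_self (G := G) hpq.ne
  obtain ⟨a, ha, hpa⟩ := (eq_or_exists_mem_sideSet (hsub hp)).resolve_left
    (by rintro rfl; exact hv hp)
  exact ⟨a, ha, sideSet_subset_sideSet hv hpa⟩

theorem sideSet_subset_or_sideSet_subset (hG : G.IsTree) (hvw : G.Adj v w) (hpq : G.Adj p q) :
    (sideSet G p q ⊆ sideSet G v w ∨ sideSet G p q ⊆ sideSet G w v) ∨
      (sideSet G q p ⊆ sideSet G v w ∨ sideSet G q p ⊆ sideSet G w v) := by
  have key : ∀ {p q}, G.Adj p q → v ∉ sideSet G p q → w ∉ sideSet G p q →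
      sideSet G p q ⊆ sideSet G v w ∨ sideSet G p q ⊆ sideSet G w v := fun hpq hv hw =>
    (mem_sideSet_or_mem_sideSet hG.connected.preconnected hvw _).imp
      (sideSet_subset_sideSet hw) (sideSet_subset_sideSet hv)
  by_cases hv : v ∈ sideSet G p q <;> by_cases hw : w ∈ sideSet G p q
  · rw [← notMem_sideSet_iff hG hpq.symm] at hv hw
    exact .inr (key hpq.symm hv hw)
  · obtain ⟨rfl, rfl⟩ := eq_and_eq_of_mem_sideSet_of_notMem hG.isAcyclic hvw hpq hv hw
    exact .inl (.inl subset_rfl)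
  · obtain ⟨rfl, rfl⟩ := eq_and_eq_of_mem_sideSet_of_notMem hG.isAcyclic hvw.symm hpq hw hv
    exact .inl (.inr subset_rfl)
  · exact .inl (key hpq hv hw)

end Sides

section Neighbors

variable {V : Type*} [Fintype V] {G : SimpleGraph V} [DecidableRel G.Adj] {v w a b c : V}

theorem card_erase_neighborFinset [DecidableEq V] (hvw : G.Adj v w) :
    ((G.neighborFinset v).erase w).card = G.degree v - 1 :=
  Finset.card_erase_of_mem (by simpa using hvw)

theorem coe_erase_neighborFinset [DecidableEq V] :
    ((G.neighborFinset v).erase w : Set V) = G.neighborSet v \ {w} := by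
  simp

theorem neighborSet_diff_singleton_eq_empty (hvw : G.Adj v w) (hv : G.degree v = 1) :
    G.neighborSet v \ {w} = ∅ := by
  classical
  have := card_erase_neighborFinset hvw
  rw [hv, Finset.card_eq_zero] at this
  rw [← coe_erase_neighborFinset, this, Finset.coe_empty]

theorem exists_neighborSet_diff_singleton_eq_pair (hvw : G.Adj v w) (hv : G.degree v = 3) :
    ∃ a b, a ≠ b ∧ G.neighborSet v \ {w} = {a, b} := by
  classical
  have := card_erase_neighborFinset hvw
  obtain ⟨a, b, hab, h⟩ := Finset.card_eq_two.mp (hv ▸ this)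
  exact ⟨a, b, hab, by rw [← coe_erase_neighborFinset, h, Finset.coe_pair]⟩

theorem neighborSet_diff_singleton_eq_pair (hv : G.degree v ≤ 3) (ha : G.Adj v a)
    (hb : G.Adj v b) (hc : G.Adj v c) (hab : a ≠ b) (hac : a ≠ c) (hbc : b ≠ c) :
    G.neighborSet v \ {c} = {a, b} := by
  classical
  have hsub : {a, b} ⊆ (G.neighborFinset v).erase c := by
    simp [Finset.insert_subset_iff, ha, hb, hac, hbc]
  have h := Finset.eq_of_subset_of_card_le hsub (by
    rw [card_erase_neighborFinset hc, Finset.card_pair hab]; omega)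
  rw [← coe_erase_neighborFinset, ← h, Finset.coe_pair]

end Neighbors

noncomputable def leafSum {V E : Type*} [Fintype V] [AddCommMonoid E] (G : SimpleGraph V)
    [DecidableRel G.Adj] (x : V → E) (v w : V) : E :=
  ∑ᶠ i ∈ {y | G.degree y = 1} ∩ sideSet G v w, x i

section LeafSums

variable {V E : Type*} [Fintype V] {G : SimpleGraph V} [DecidableRel G.Adj] {v w a b : V}

theorem leafSum_congr [AddCommMonoid E] {x y : V → E} {s : Set V} (hs : sideSet G v w ⊆ s)
    (h : EqOn x y s) : leafSum G x v w = leafSum G y v w :=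
  finsum_mem_congr rfl fun _ hi => h (hs hi.2)

theorem leafSum_add_leafSum_swap [AddCommMonoid E] (hG : G.IsTree) (hvw : G.Adj v w)
    (x : V → E) :
    leafSum G x v w + leafSum G x w v = ∑ᶠ i ∈ {y | G.degree y = 1}, x i := by
  have hcover : sideSet G v w ∪ sideSet G w v = univ :=
    eq_univ_of_forall (mem_sideSet_or_mem_sideSet hG.connected.preconnected hvw)
  rw [leafSum, leafSum, ← finsum_mem_union
      ((disjoint_sideSet hG.isAcyclic hvw).inter_left' _ |>.inter_right' _)
      (toFinite _) (toFinite _),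
    ← inter_union_distrib_left, hcover, inter_univ]

theorem leafSum_swap [AddCommGroup E] (hG : G.IsTree) {x : V → E}
    (hx : ∑ᶠ i ∈ {y | G.degree y = 1}, x i = 0) (hvw : G.Adj v w) :
    leafSum G x w v = -leafSum G x v w :=
  eq_neg_of_add_eq_zero_right ((leafSum_add_leafSum_swap hG hvw x).trans hx)

theorem leafSum_eq_add [AddCommMonoid E] (hG : G.IsAcyclic) (hvw : G.Adj v w)
    (hv : G.degree v ≠ 1) (hab : a ≠ b) (hN : G.neighborSet v \ {w} = {a, b}) (x : V → E) :
    leafSum G x v w = leafSum G x a v + leafSum G x b v := by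
  have ha : a ∈ G.neighborSet v \ {w} := hN ▸ Or.inl rfl
  have hb : b ∈ G.neighborSet v \ {w} := hN ▸ Or.inr rfl
  have hdisj := disjoint_sideSet_of_ne hG ha.1 hb.1 hab
  rw [leafSum, sideSet_eq_insert_biUnion hG hvw, hN, biUnion_pair,
    inter_insert_of_notMem (show v ∉ {y | G.degree y = 1} from hv), inter_union_distrib_left,
    finsum_mem_union (hdisj.inter_left' _ |>.inter_right' _) (toFinite _) (toFinite _)]
  rfl

theorem leafSum_of_degree_eq_one [AddCommMonoid E] (hG : G.IsAcyclic) (hvw : G.Adj v w)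
    (hv : G.degree v = 1) (x : V → E) : leafSum G x v w = x v := by
  rw [leafSum, sideSet_eq_insert_biUnion hG hvw, neighborSet_diff_singleton_eq_empty hvw hv]
  simp [hv]

end LeafSums

theorem exists_eqOn_and_eqOn {α β : Type*} {s t : Set α} (hst : Disjoint s t) (f g : α → β) :
    ∃ h : α → β, EqOn h f s ∧ EqOn h g t := by
  classical
  exact ⟨s.piecewise f g, piecewise_eqOn s f g,
    (piecewise_eqOn_compl s f g).mono hst.subset_compl_left⟩

def RealizesOn {V E : Type*} [Fintype V] [NormedAddCommGroup E] (G : SimpleGraph V)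
    [DecidableRel G.Adj] (d : V → V → ℝ) (x : V → E) (s : Set V) : Prop :=
  ∀ p q, G.Adj p q → sideSet G p q ⊆ s → d p q = ‖leafSum G x p q‖

section Realization

variable {V E : Type*} [Fintype V] {G : SimpleGraph V} [DecidableRel G.Adj]
  [NormedAddCommGroup E] {d : V → V → ℝ} {x y : V → E} {s : Set V} {v w : V}

theorem RealizesOn.congr (h : RealizesOn G d x s) (hyx : EqOn y x s) : RealizesOn G d y s :=
  fun p q hpq hs => by rw [h p q hpq hs, leafSum_congr hs hyx]

theorem realizesOn_sideSet (hG : G.IsAcyclic) (hvw : G.Adj v w)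
    (hd : d v w = ‖leafSum G x v w‖)
    (h : ∀ a ∈ G.neighborSet v \ {w}, RealizesOn G d x (sideSet G a v)) :
    RealizesOn G d x (sideSet G v w) := by
  intro p q hpq hsub
  rcases eq_and_eq_or_exists_sideSet_subset hG hvw hpq hsub with ⟨rfl, rfl⟩ | ⟨a, ha, hpa⟩
  exacts [hd, h a ha p q hpq hpa]

theorem realizesOn_univ (hG : G.IsTree) (hsymm : ∀ v w, d v w = d w v)
    (hx : ∑ᶠ i ∈ {y | G.degree y = 1}, x i = 0) (hvw : G.Adj v w)
    (hv : RealizesOn G d x (sideSet G v w)) (hw : RealizesOn G d x (sideSet G w v)) :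
    RealizesOn G d x univ := by
  have h : ∀ p q, G.Adj p q → sideSet G p q ⊆ sideSet G v w ∨ sideSet G p q ⊆ sideSet G w v →
      d p q = ‖leafSum G x p q‖ := fun p q hpq h' => h'.elim (hv p q hpq) (hw p q hpq)
  intro p q hpq _
  rcases sideSet_subset_or_sideSet_subset hG hvw hpq with hpq' | hqp
  · exact h p q hpq hpq'
  · rw [hsymm, h q p hpq.symm hqp, leafSum_swap hG hx hpq, norm_neg]

theorem exists_leafSum_eq_realizesOn_sideSet [InnerProductSpace ℝ E] (hE : 2 ≤ finrank ℝ E)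
    (hG : G.IsAcyclic) (hdeg : ∀ v, G.degree v = 1 ∨ G.degree v = 3)
    (hsymm : ∀ v w, d v w = d w v)
    (htri : ∀ t a b c : V, G.Adj t a → G.Adj t b → G.Adj t c →
      a ≠ b → b ≠ c → a ≠ c → d t c ≤ d t a + d t b)
    (hvw : G.Adj v w) (u : E) (hu : ‖u‖ = d v w) :
    ∃ x : V → E, leafSum G x v w = u ∧ RealizesOn G d x (sideSet G v w) := by
  induction hn : (sideSet G v w).ncard using Nat.strong_induction_on generalizing v w u with
  | _ n ih =>
  rcases hdeg v with hv | hv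
  · refine ⟨fun _ => u, leafSum_of_degree_eq_one hG hvw hv _, realizesOn_sideSet hG hvw ?_ ?_⟩
    · rw [leafSum_of_degree_eq_one hG hvw hv, hu]
    · simp [neighborSet_diff_singleton_eq_empty hvw hv]
  obtain ⟨a, b, hab, hN⟩ := exists_neighborSet_diff_singleton_eq_pair hvw hv
  have ha : a ∈ G.neighborSet v \ {w} := hN ▸ Or.inl rfl
  have hb : b ∈ G.neighborSet v \ {w} := hN ▸ Or.inr rfl
  obtain ⟨p, hp, hup⟩ := exists_norm_eq_norm_sub_eq hE u (s := d v a) (t := d v b)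
    (hu ▸ htri v a b w ha.1 hb.1 hvw hab hb.2 ha.2)
    (hu ▸ htri v w b a hvw hb.1 ha.1 (Ne.symm hb.2) (Ne.symm hab) (Ne.symm ha.2))
    (hu ▸ htri v w a b hvw ha.1 hb.1 (Ne.symm ha.2) hab (Ne.symm hb.2))
  have hlt : ∀ c ∈ G.neighborSet v \ {w}, (sideSet G c v).ncard < n := fun c hc =>
    hn ▸ ncard_lt_ncard ((ssubset_iff_of_subset (sideSet_subset_of_adj hG hvw hc)).mpr
      ⟨v, mem_sideSet_self hvw.ne, notMem_sideSet_of_adj hG hc.1.symm⟩)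
  obtain ⟨xa, hxa, hra⟩ := ih _ (hlt a ha) ha.1.symm p (by rw [hp, hsymm]) rfl
  obtain ⟨xb, hxb, hrb⟩ := ih _ (hlt b hb) hb.1.symm (u - p) (by rw [hup, hsymm]) rfl
  obtain ⟨x, hxa', hxb'⟩ :=
    exists_eqOn_and_eqOn (disjoint_sideSet_of_ne hG ha.1 hb.1 hab) xa xb
  have hx : leafSum G x v w = u := by
    rw [leafSum_eq_add hG hvw (by omega) hab hN, leafSum_congr subset_rfl hxa',
      leafSum_congr subset_rfl hxb', hxa, hxb, add_sub_cancel]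
  refine ⟨x, hx, realizesOn_sideSet hG hvw (by rw [hx, hu]) ?_⟩
  rw [hN]
  rintro c (rfl | rfl)
  exacts [hra.congr hxa', hrb.congr hxb']

theorem exists_realizesOn_univ [InnerProductSpace ℝ E] (hE : 2 ≤ finrank ℝ E) (hG : G.IsTree)
    (hdeg : ∀ v, G.degree v = 1 ∨ G.degree v = 3) (hsymm : ∀ v w, d v w = d w v)
    (hd0 : ∀ v w, G.Adj v w → 0 ≤ d v w)
    (htri : ∀ t a b c : V, G.Adj t a → G.Adj t b → G.Adj t c →
      a ≠ b → b ≠ c → a ≠ c → d t c ≤ d t a + d t b) :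
    ∃ x : V → E, ∑ᶠ i ∈ {y | G.degree y = 1}, x i = 0 ∧ RealizesOn G d x univ := by
  by_cases hedge : ∃ v w, G.Adj v w
  swap
  · simp only [not_exists] at hedge
    exact ⟨0, by simp, fun p q hpq => (hedge p q hpq).elim⟩
  obtain ⟨v, w, hvw⟩ := hedge
  have : Nontrivial E := Module.nontrivial_of_finrank_pos (R := ℝ) (by omega)
  obtain ⟨u, hu⟩ := exists_norm_eq E (hd0 v w hvw)
  obtain ⟨xv, hxv, hrv⟩ :=
    exists_leafSum_eq_realizesOn_sideSet hE hG.isAcyclic hdeg hsymm htri hvw u hu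
  obtain ⟨xw, hxw, hrw⟩ := exists_leafSum_eq_realizesOn_sideSet hE hG.isAcyclic hdeg hsymm
    htri hvw.symm (-u) (by rw [norm_neg, hu, hsymm])
  obtain ⟨x, hxv', hxw'⟩ := exists_eqOn_and_eqOn (disjoint_sideSet hG.isAcyclic hvw) xv xw
  have hx : ∑ᶠ i ∈ {y | G.degree y = 1}, x i = 0 := by
    rw [← leafSum_add_leafSum_swap hG hvw, leafSum_congr subset_rfl hxv',
      leafSum_congr subset_rfl hxw', hxv, hxw, add_neg_cancel]
  exact ⟨x, hx, realizesOn_univ hG hsymm hx hvw (hrv.congr hxv') (hrw.congr hxw')⟩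

theorem norm_leafSum_le (hG : G.IsTree) (hx : ∑ᶠ i ∈ {y | G.degree y = 1}, x i = 0)
    {t a b c : V} (ht : G.degree t ≤ 3) (hta : G.Adj t a) (htb : G.Adj t b) (htc : G.Adj t c)
    (hab : a ≠ b) (hac : a ≠ c) (hbc : b ≠ c) :
    ‖leafSum G x t c‖ ≤ ‖leafSum G x t a‖ + ‖leafSum G x t b‖ := by
  have hN := neighborSet_diff_singleton_eq_pair ht hta htb htc hab hac hbc
  have ht1 : G.degree t ≠ 1 := fun h =>
    (insert_nonempty a {b}).ne_empty (hN ▸ neighborSet_diff_singleton_eq_empty htc h)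
  rw [leafSum_eq_add hG.isAcyclic htc ht1 hab hN, leafSum_swap hG hx hta,
    leafSum_swap hG hx htb, ← norm_neg (leafSum G x t a), ← norm_neg (leafSum G x t b)]
  exact norm_add_le _ _

end Realization

/-- `Γ` is a finite tree whose leaves are the half-edges and whose other vertices are trivalent;
an edge `a` is a pair `(v, w)` of adjacent vertices, `I(a)` is the set of leaves on the side of
`v`, and `d v w = d w v` is the coordinate `d_a`. -/
theorem image_of_lambda_eq_polyhedron_general {V : Type*} [Fintype V]
    (G : SimpleGraph V) [DecidableRel G.Adj] (hG : G.IsTree)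
    (hdeg : ∀ x : V, G.degree x = 1 ∨ G.degree x = 3)
    (d : V → V → ℝ) (hsymm : ∀ v w, d v w = d w v) :
    (∃ x : V → EuclideanSpace ℝ (Fin 3),
        (∑ᶠ i ∈ {y : V | G.degree y = 1}, x i) = 0 ∧
        ∀ v w : V, G.Adj v w →
          d v w = ‖∑ᶠ i ∈ ({y : V | G.degree y = 1} ∩ sideSet G v w), x i‖)
      ↔ ((∀ v w : V, G.Adj v w → 0 ≤ d v w) ∧
          ∀ t a b c : V, G.Adj t a → G.Adj t b → G.Adj t c →
            a ≠ b → b ≠ c → a ≠ c → d t c ≤ d t a + d t b) := by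
  constructor
  · rintro ⟨x, hx, hd⟩
    refine ⟨fun v w hvw => hd v w hvw ▸ norm_nonneg _,
      fun t a b c hta htb htc hab hbc hac => ?_⟩
    rw [hd t a hta, hd t b htb, hd t c htc]
    exact norm_leafSum_le hG hx (by rcases hdeg t with h | h <;> omega) hta htb htc hab hac hbc
  · rintro ⟨hd0, htri⟩
    obtain ⟨x, hx, hr⟩ := exists_realizesOn_univ (E := EuclideanSpace ℝ (Fin 3)) (by simp) hG
      hdeg hsymm hd0 htri
    exact ⟨x, hx, fun v w hvw => hr v w hvw (subset_univ _)⟩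

/-- An admissible graph `Γ` is modeled as a finite tree `G` whose leaves are
the half-edges and whose internal vertices are trivalent.  A tuple of vectors
`x` in `ℝ³` indexed by the half-edges with `∑ xᵢ = 0` gives, for each directed
edge `(v, w)`, the value `λ_{(v,w)}(x) = ‖∑_{i ∈ I(v,w)} xᵢ‖` where `I(v, w)`
is the set of half-edges on the `v`-side of the edge (for the edge at a leaf
`i` this is just `‖xᵢ‖`).  A symmetric function `d` on the edges is in the
image of `λ` if and only if it is nonnegative and satisfies the triangle
inequalities at each vertex, i.e. `d ∈ Δ(Γ)`. -/
theorem image_of_lambda_eq_polyhedron {V : Type*} [Fintype V] [DecidableEq V]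
    (G : SimpleGraph V) [DecidableRel G.Adj] (hG : G.IsTree)
    (hdeg : ∀ x : V, G.degree x = 1 ∨ G.degree x = 3)
    (d : V → V → ℝ) (hsymm : ∀ v w, d v w = d w v) :
    (∃ x : V → EuclideanSpace ℝ (Fin 3),
        (∑ᶠ i ∈ {y : V | G.degree y = 1}, x i) = 0 ∧
        ∀ v w : V, G.Adj v w →
          d v w = ‖∑ᶠ i ∈ ({y : V | G.degree y = 1} ∩ sideSet G v w), x i‖)
      ↔ ((∀ v w : V, G.Adj v w → 0 ≤ d v w) ∧
          ∀ t a b c : V, G.Adj t a → G.Adj t b → G.Adj t c →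
            a ≠ b → b ≠ c → a ≠ c → d t c ≤ d t a + d t b) :=
  image_of_lambda_eq_polyhedron_general G hG hdeg d hsymm
end
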